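/- arXiv:1504.04351 — 2 statements merged into one kernel-verified Lean document; each statement's English description precedes it below -/
import Mathlib

section
/- Let P, Λ, σ² > 0, σ_S² ≥ 0, α = P/(P+Λ+σ²), P_U = P + α²σ_S². Define f(V,W) = √α·(P + ασ_S² + Vα√(Wσ_S²)) / √(P_U·(P + ασ_S² + α(W−Λ) + 2Vα√(Wσ_S²))). Then for all V with −1 ≤ V ≤ 1 and W with 0 ≤ W ≤ Λ (such that the denominator is positive), f(V,W) ≥ f(0,Λ) = √(α(P+ασ_S²)/P_U). -/
theorem stmt_0 (P Λ σ2 σS2 : ℝ) (hP : 0 < P) (hΛ : 0 < Λ) (hσ : 0 < σ2)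
    (hσS : 0 ≤ σS2)
    (α PU : ℝ) (hα : α = P / (P + Λ + σ2)) (hPU : PU = P + α ^ 2 * σS2)
    (V W : ℝ) (hV1 : -1 ≤ V) (hV2 : V ≤ 1) (hW0 : 0 ≤ W) (hWΛ : W ≤ Λ)
    (hden : 0 < P + α * σS2 + α * (W - Λ) + 2 * V * α * Real.sqrt (W * σS2)) :
    Real.sqrt α * (P + α * σS2 + V * α * Real.sqrt (W * σS2)) /
      Real.sqrt (PU * (P + α * σS2 + α * (W - Λ) + 2 * V * α * Real.sqrt (W * σS2)))
      ≥ Real.sqrt (α * (P + α * σS2) / PU) := by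
  set s := Real.sqrt (W * σS2) with hs
  have hαpos : 0 < α := by rw [hα]; positivity
  have hPUpos : 0 < PU := by rw [hPU]; positivity
  have hs0 : 0 ≤ s := Real.sqrt_nonneg _
  have hm : α * (W - Λ) ≤ 0 :=
    mul_nonpos_of_nonneg_of_nonpos hαpos.le (by linarith)
  have hA : 0 < P + α * σS2 := by positivity
  have hnum : 0 ≤ P + α * σS2 + V * α * s := by nlinarith [hden, hm, hA]
  have hD : 0 < PU * (P + α * σS2 + α * (W - Λ) + 2 * V * α * s) :=
    mul_pos hPUpos hden
  have key : Real.sqrt α * (P + α * σS2 + V * α * s) =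
      Real.sqrt (α * (P + α * σS2 + V * α * s) ^ 2) := by
    rw [Real.sqrt_mul hαpos.le, Real.sqrt_sq hnum]
  rw [ge_iff_le, key, ← Real.sqrt_div (by positivity)]
  apply Real.sqrt_le_sqrt
  rw [div_le_div_iff₀ hPUpos hD]
  have hsq : (V * α * s) ^ 2 ≥ 0 := sq_nonneg _
  have hAm : (P + α * σS2) * (α * (W - Λ)) ≤ 0 :=
    mul_nonpos_of_nonneg_of_nonpos hA.le hm
  nlinarith [mul_pos hαpos hPUpos, mul_nonneg (mul_nonneg hαpos.le hPUpos.le) hsq,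
    mul_nonpos_of_nonneg_of_nonpos (mul_nonneg hαpos.le hPUpos.le) hAm]
end

section
/- Let n ≥ 1, r a fixed unit vector in ℝⁿ, and R a random vector uniformly distributed on the unit sphere of ℝⁿ, independent of r. Then for any γ with 1/√(2πn) < γ < 1, P(⟨r, R⟩ ≥ γ) ≤ 2^((n−1)·(1/2)·log₂(1−γ²)). -/
/-!
The cap `{x ∈ S | γ ≤ ⟪r, x⟫}` is the radial projection of the truncated cone
`K = {y | γ ‖y‖ ≤ ⟪r, y⟫, ‖y‖ < 1}`, so its normalized surface measure is `vol K / vol B`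
(`Measure.toSphere`). In coordinates `y = (z, t)` with `t = ⟪r, y⟫`, the fibre of `K` over `z` is
the interval `[γ ‖z‖ / β, √(1 - ‖z‖²))` with `β = √(1 - γ²)`. The substitution `z = β w` gives
`vol K = β^(n-1) ∫ (√(1 - β² ‖w‖²) - γ ‖w‖)⁺ dw`, and this integrand is at most `√(1 - ‖w‖²)⁺`,
whose integral is the volume of a half ball.
-/

open RealInnerProductSpace MeasureTheory Pointwise

namespace Real

theorem sqrt_one_sub_mul_sq_le {β γ u : ℝ} (hβγ : β ^ 2 + γ ^ 2 = 1) (hγ : 0 ≤ γ) (hu : 0 ≤ u) :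
    √(1 - β ^ 2 * u ^ 2) ≤ √(1 - u ^ 2) + γ * u := by
  have hsq : 1 - u ^ 2 ≤ √(1 - u ^ 2) ^ 2 := by
    rcases le_total 0 (1 - u ^ 2) with h | h
    · rw [sq_sqrt h]
    · exact h.trans (sq_nonneg _)
  rw [sqrt_le_iff]
  exact ⟨by positivity, by nlinarith [mul_nonneg (mul_nonneg (sqrt_nonneg (1 - u ^ 2)) hγ) hu]⟩

theorem mul_sqrt_sq_add_sq_le_iff {γ x t : ℝ} (hγ0 : 0 ≤ γ) (hγ1 : γ < 1) (hx : 0 ≤ x) :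
    γ * √(x ^ 2 + t ^ 2) ≤ t ↔ γ / √(1 - γ ^ 2) * x ≤ t := by
  have hβ : 0 < √(1 - γ ^ 2) := sqrt_pos.2 (by nlinarith)
  have hβ2 : √(1 - γ ^ 2) ^ 2 = 1 - γ ^ 2 := sq_sqrt (by nlinarith)
  rw [div_mul_eq_mul_div, div_le_iff₀ hβ]
  have key (ht : 0 ≤ t) : γ * √(x ^ 2 + t ^ 2) ≤ t ↔ γ * x ≤ t * √(1 - γ ^ 2) := by
    rw [← sq_le_sq₀ (by positivity) ht, ← sq_le_sq₀ (mul_nonneg hγ0 hx) (by positivity), mul_pow,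
      mul_pow, mul_pow, sq_sqrt (by positivity), hβ2]
    constructor <;> intro <;> linarith
  constructor
  · intro h
    exact (key ((by positivity : 0 ≤ γ * √(x ^ 2 + t ^ 2)).trans h)).1 h
  · intro h
    have ht : 0 ≤ t := by nlinarith [mul_nonneg hγ0 hx]
    exact (key ht).2 h

theorem volume_setOf_le_and_add_sq_lt_one {c s : ℝ} (hc : 0 ≤ c) :
    volume {t : ℝ | c ≤ t ∧ s + t ^ 2 < 1} = ENNReal.ofReal (√(1 - s) - c) := by
  have : {t : ℝ | c ≤ t ∧ s + t ^ 2 < 1} = Set.Ico c √(1 - s) := by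
    ext t
    simp only [Set.mem_ofPred_eq, Set.mem_Ico, and_congr_right_iff]
    intro hct
    rw [lt_sqrt (hc.trans hct)]
    constructor <;> intro <;> linarith
  rw [this, volume_Ico]

end Real

namespace MeasureTheory.Measure

variable {E : Type*} [NormedAddCommGroup E] [NormedSpace ℝ E] [MeasurableSpace E] [BorelSpace E]
  [FiniteDimensional ℝ E] (μ : Measure E) [μ.IsAddHaarMeasure]

theorem lintegral_comp_smul (f : E → ENNReal) {R : ℝ} (hR : R ≠ 0) :
    ∫⁻ x, f (R • x) ∂μ = ENNReal.ofReal |(R ^ Module.finrank ℝ E)⁻¹| * ∫⁻ x, f x ∂μ := by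
  rw [← smul_eq_mul, ← lintegral_smul_measure, ← map_addHaar_smul μ hR]
  exact (lintegral_map_equiv f (MeasurableEquiv.smul₀ R hR)).symm

end MeasureTheory.Measure

theorem measure_prod_setOf_mul_norm_le {V : Type*} [SeminormedAddCommGroup V] [MeasurableSpace V]
    [OpensMeasurableSpace V] (μ : Measure V) [SFinite μ] {a : ℝ} (ha : 0 ≤ a) :
    (μ.prod volume) {p : V × ℝ | a * ‖p.1‖ ≤ p.2 ∧ ‖p.1‖ ^ 2 + p.2 ^ 2 < 1}
      = ∫⁻ z, ENNReal.ofReal (√(1 - ‖z‖ ^ 2) - a * ‖z‖) ∂μ := by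
  have hs : MeasurableSet {p : V × ℝ | a * ‖p.1‖ ≤ p.2 ∧ ‖p.1‖ ^ 2 + p.2 ^ 2 < 1} := by
    rw [Set.ofPred_and]
    exact (measurableSet_le (by fun_prop) (by fun_prop)).inter
      (measurableSet_lt (by fun_prop) (by fun_prop))
  rw [Measure.prod_apply hs]
  exact lintegral_congr fun z ↦
    Real.volume_setOf_le_and_add_sq_lt_one (c := a * ‖z‖) (s := ‖z‖ ^ 2) (by positivity)

section Cone

variable {V : Type*} [NormedAddCommGroup V] [NormedSpace ℝ V] [MeasurableSpace V] [BorelSpace V]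
  [FiniteDimensional ℝ V] (μ : Measure V) [μ.IsAddHaarMeasure]

theorem measure_prod_cone_le {γ : ℝ} (hγ0 : 0 ≤ γ) (hγ1 : γ < 1) :
    (μ.prod volume) {p : V × ℝ | γ * √(‖p.1‖ ^ 2 + p.2 ^ 2) ≤ p.2 ∧ ‖p.1‖ ^ 2 + p.2 ^ 2 < 1}
      ≤ ENNReal.ofReal (√(1 - γ ^ 2) ^ Module.finrank ℝ V)
        * (μ.prod volume) {p : V × ℝ | ‖p.1‖ ^ 2 + p.2 ^ 2 < 1} := by
  set β := √(1 - γ ^ 2)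
  have hβ : 0 < β := Real.sqrt_pos.2 (by nlinarith)
  have hβγ : β ^ 2 + γ ^ 2 = 1 := by rw [Real.sq_sqrt (by nlinarith)]; ring
  have hcone : {p : V × ℝ | γ * √(‖p.1‖ ^ 2 + p.2 ^ 2) ≤ p.2 ∧ ‖p.1‖ ^ 2 + p.2 ^ 2 < 1}
      = {p : V × ℝ | γ / β * ‖p.1‖ ≤ p.2 ∧ ‖p.1‖ ^ 2 + p.2 ^ 2 < 1} := by
    ext p
    exact and_congr_left' (Real.mul_sqrt_sq_add_sq_le_iff hγ0 hγ1 (norm_nonneg _))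
  calc _ = ∫⁻ z, ENNReal.ofReal (√(1 - ‖z‖ ^ 2) - γ / β * ‖z‖) ∂μ := by
        rw [hcone, measure_prod_setOf_mul_norm_le μ (by positivity)]
    _ = ENNReal.ofReal (β ^ Module.finrank ℝ V)
          * ∫⁻ w, ENNReal.ofReal (√(1 - ‖β • w‖ ^ 2) - γ / β * ‖β • w‖) ∂μ := by
        rw [Measure.lintegral_comp_smul μ
            (fun z ↦ ENNReal.ofReal (√(1 - ‖z‖ ^ 2) - γ / β * ‖z‖)) hβ.ne',
          ← mul_assoc, abs_of_pos (by positivity), ← ENNReal.ofReal_mul (by positivity),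
          mul_inv_cancel₀ (by positivity), ENNReal.ofReal_one, one_mul]
    _ ≤ ENNReal.ofReal (β ^ Module.finrank ℝ V)
          * ∫⁻ w, ENNReal.ofReal (√(1 - ‖w‖ ^ 2) - 0 * ‖w‖) ∂μ := by
        gcongr _ * ∫⁻ w, ENNReal.ofReal ?_ ∂μ with w
        have : γ / β * (β * ‖w‖) = γ * ‖w‖ := by field_simp
        rw [norm_smul, Real.norm_of_nonneg hβ.le, this, mul_pow, zero_mul, sub_zero,
          sub_le_iff_le_add]
        exact Real.sqrt_one_sub_mul_sq_le hβγ hγ0 (norm_nonneg w)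
    _ = ENNReal.ofReal (β ^ Module.finrank ℝ V)
          * (μ.prod volume) {p : V × ℝ | 0 * ‖p.1‖ ≤ p.2 ∧ ‖p.1‖ ^ 2 + p.2 ^ 2 < 1} := by
        rw [measure_prod_setOf_mul_norm_le μ le_rfl]
    _ ≤ _ := by
        gcongr _ * ?_
        exact measure_mono fun p hp ↦ hp.2

end Cone

theorem EuclideanSpace.measurePreserving_tail_prod_zero (m : ℕ) :
    MeasurePreserving
      (fun x : EuclideanSpace ℝ (Fin (m + 1)) ↦ (WithLp.toLp 2 (fun i : Fin m ↦ x i.succ), x 0)) :=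
  ((PiLp.volume_preserving_toLp (Fin m)).prod (MeasurePreserving.id volume)).comp
    (Measure.measurePreserving_swap.comp
      ((volume_preserving_piFinSuccAbove (fun _ ↦ ℝ) 0).comp (PiLp.volume_preserving_ofLp _)))

theorem EuclideanSpace.norm_tail_sq_add_sq_zero {m : ℕ} (x : EuclideanSpace ℝ (Fin (m + 1))) :
    ‖WithLp.toLp 2 (fun i : Fin m ↦ x i.succ)‖ ^ 2 + x 0 ^ 2 = ‖x‖ ^ 2 := by
  simp only [EuclideanSpace.real_norm_sq_eq, Fin.sum_univ_succ (fun i ↦ x i ^ 2)]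
  ring

theorem exists_orthonormalBasis_zero_eq {E : Type*} [NormedAddCommGroup E] [InnerProductSpace ℝ E]
    [FiniteDimensional ℝ E] {m : ℕ} (hE : Module.finrank ℝ E = m + 1) {r : E} (hr : ‖r‖ = 1) :
    ∃ b : OrthonormalBasis (Fin (m + 1)) ℝ E, b 0 = r := by
  have hv : Orthonormal ℝ (Set.domRestrict {(0 : Fin (m + 1))} fun _ ↦ r) :=
    ⟨fun _ ↦ hr, fun i j hij ↦ (hij (Subtype.ext (i.2.trans j.2.symm))).elim⟩
  obtain ⟨b, hb⟩ := hv.exists_orthonormalBasis_extension_of_card_eq (by simpa using hE)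
  exact ⟨b, hb 0 rfl⟩

theorem exists_measurePreserving_prod_inner {E : Type*} [NormedAddCommGroup E]
    [InnerProductSpace ℝ E] [FiniteDimensional ℝ E] [MeasurableSpace E] [BorelSpace E] {m : ℕ}
    (hE : Module.finrank ℝ E = m + 1) {r : E} (hr : ‖r‖ = 1) :
    ∃ Φ : E → EuclideanSpace ℝ (Fin m) × ℝ, MeasurePreserving Φ ∧
      ∀ y, (Φ y).2 = ⟪r, y⟫ ∧ ‖(Φ y).1‖ ^ 2 + (Φ y).2 ^ 2 = ‖y‖ ^ 2 := by
  obtain ⟨b, hb⟩ := exists_orthonormalBasis_zero_eq hE hr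
  refine ⟨_, (EuclideanSpace.measurePreserving_tail_prod_zero m).comp b.measurePreserving_repr,
    fun y ↦ ⟨?_, ?_⟩⟩
  · simp [b.repr_apply_apply, hb]
  · simp only [Function.comp_apply, EuclideanSpace.norm_tail_sq_add_sq_zero,
      LinearIsometryEquiv.norm_map]

theorem Ioo_smul_setOf_le_inner_subset {E : Type*} [NormedAddCommGroup E]
    [InnerProductSpace ℝ E] (r : E) (γ : ℝ) :
    Set.Ioo (0 : ℝ) 1 • ((↑) '' {x : Metric.sphere (0 : E) 1 | γ ≤ ⟪r, (x : E)⟫})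
      ⊆ {y : E | γ * ‖y‖ ≤ ⟪r, y⟫ ∧ ‖y‖ < 1} := by
  rintro _ ⟨c, ⟨hc0, hc1⟩, _, ⟨x, hx, rfl⟩, rfl⟩
  have hx1 : ‖(x : E)‖ = 1 := norm_eq_of_mem_sphere x
  simp only [Set.mem_ofPred_eq, norm_smul, hx1, real_inner_smul_right, Real.norm_of_nonneg hc0.le,
    mul_one]
  exact ⟨by rw [mul_comm]; exact mul_le_mul_of_nonneg_left hx hc0.le, hc1⟩

section Sphere

variable {E : Type*} [NormedAddCommGroup E] [InnerProductSpace ℝ E] [FiniteDimensional ℝ E]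
  [MeasurableSpace E] [BorelSpace E]

theorem volume_cone_le {m : ℕ} (hE : Module.finrank ℝ E = m + 1) {r : E} (hr : ‖r‖ = 1)
    {γ : ℝ} (hγ0 : 0 ≤ γ) (hγ1 : γ < 1) :
    volume {y : E | γ * ‖y‖ ≤ ⟪r, y⟫ ∧ ‖y‖ < 1}
      ≤ ENNReal.ofReal (√(1 - γ ^ 2) ^ m) * volume (Metric.ball (0 : E) 1) := by
  obtain ⟨Φ, hΦ, hΦy⟩ := exists_measurePreserving_prod_inner hE hr
  have hcone : {y : E | γ * ‖y‖ ≤ ⟪r, y⟫ ∧ ‖y‖ < 1} = Φ ⁻¹'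
      {p | γ * √(‖p.1‖ ^ 2 + p.2 ^ 2) ≤ p.2 ∧ ‖p.1‖ ^ 2 + p.2 ^ 2 < 1} := by
    ext y
    simp only [Set.mem_ofPred_eq, Set.mem_preimage]
    rw [(hΦy y).2, (hΦy y).1, Real.sqrt_sq (norm_nonneg y), sq_lt_one_iff₀ (norm_nonneg y)]
  have hball : Metric.ball (0 : E) 1 = Φ ⁻¹' {p | ‖p.1‖ ^ 2 + p.2 ^ 2 < 1} := by
    ext y
    simp only [Metric.mem_ball, dist_zero_right, Set.mem_preimage, Set.mem_ofPred_eq, (hΦy y).2,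
      sq_lt_one_iff₀ (norm_nonneg y)]
  have hcone_meas : MeasurableSet {p : EuclideanSpace ℝ (Fin m) × ℝ |
      γ * √(‖p.1‖ ^ 2 + p.2 ^ 2) ≤ p.2 ∧ ‖p.1‖ ^ 2 + p.2 ^ 2 < 1} := by
    rw [Set.ofPred_and]
    exact (measurableSet_le (by fun_prop) (by fun_prop)).inter
      (measurableSet_lt (by fun_prop) (by fun_prop))
  have hball_meas : MeasurableSet {p : EuclideanSpace ℝ (Fin m) × ℝ | ‖p.1‖ ^ 2 + p.2 ^ 2 < 1} :=
    measurableSet_lt (by fun_prop) (by fun_prop)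
  rw [hcone, hball, hΦ.measure_preimage hcone_meas.nullMeasurableSet,
    hΦ.measure_preimage hball_meas.nullMeasurableSet, Measure.volume_eq_prod]
  simpa only [finrank_euclideanSpace_fin] using
    measure_prod_cone_le (volume : Measure (EuclideanSpace ℝ (Fin m))) hγ0 hγ1

theorem toSphere_setOf_le_inner_le {m : ℕ} (hE : Module.finrank ℝ E = m + 1) {r : E}
    (hr : ‖r‖ = 1) {γ : ℝ} (hγ0 : 0 ≤ γ) (hγ1 : γ < 1) :
    (volume : Measure E).toSphere {x : Metric.sphere (0 : E) 1 | γ ≤ ⟪r, (x : E)⟫}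
      ≤ ENNReal.ofReal (√(1 - γ ^ 2) ^ m) * (volume : Measure E).toSphere Set.univ := by
  have hmeas : MeasurableSet {x : Metric.sphere (0 : E) 1 | γ ≤ ⟪r, (x : E)⟫} :=
    measurableSet_le measurable_const (continuous_const.inner continuous_subtype_val).measurable
  rw [Measure.toSphere_apply' _ hmeas, Measure.toSphere_apply_univ, mul_left_comm]
  gcongr _ * ?_
  exact (measure_mono (Ioo_smul_setOf_le_inner_subset r γ)).trans (volume_cone_le hE hr hγ0 hγ1)

end Sphere

theorem stmt_19_general (n : ℕ)
    (r : EuclideanSpace ℝ (Fin n)) (hr : ‖r‖ = 1)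
    (μ : Measure (Metric.sphere (0 : EuclideanSpace ℝ (Fin n)) 1))
    (hμ : μ = ((volume : Measure (EuclideanSpace ℝ (Fin n))).toSphere Set.univ)⁻¹ •
        (volume : Measure (EuclideanSpace ℝ (Fin n))).toSphere)
    (γ : ℝ) (hγl : 1 / Real.sqrt (2 * Real.pi * n) < γ) (hγu : γ < 1) :
    μ { x : Metric.sphere (0 : EuclideanSpace ℝ (Fin n)) 1 |
        γ ≤ ⟪r, (x : EuclideanSpace ℝ (Fin n))⟫ }
      ≤ ENNReal.ofReal
          ((2 : ℝ) ^ (((n : ℝ) - 1) * ((1 / 2) * Real.logb 2 (1 - γ ^ 2)))) := by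
  obtain ⟨m, rfl⟩ : ∃ m, n = m + 1 :=
    Nat.exists_eq_succ_of_ne_zero (by rintro rfl; simp [Subsingleton.elim r 0] at hr)
  have hγ0 : 0 ≤ γ := (by positivity : (0 : ℝ) ≤ 1 / √(2 * Real.pi * (m + 1 : ℕ))).trans hγl.le
  have hpow : (2 : ℝ) ^ ((((m + 1 : ℕ) : ℝ) - 1) * ((1 / 2) * Real.logb 2 (1 - γ ^ 2)))
      = √(1 - γ ^ 2) ^ m := by
    rw [Nat.cast_succ, add_sub_cancel_right, mul_comm, Real.rpow_mul zero_le_two, mul_comm,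
      Real.rpow_mul zero_le_two, Real.rpow_logb two_pos (by norm_num) (by nlinarith),
      ← Real.sqrt_eq_rpow, Real.rpow_natCast]
  set U := (volume : Measure (EuclideanSpace ℝ (Fin (m + 1)))).toSphere Set.univ
  have hU0 : U ≠ 0 := by
    simp [U, (Metric.measure_ball_pos volume (0 : EuclideanSpace ℝ (Fin (m + 1))) one_pos).ne']
  rw [hpow, hμ, Measure.smul_apply, smul_eq_mul]
  calc _ ≤ U⁻¹ * (ENNReal.ofReal (√(1 - γ ^ 2) ^ m) * U) := by
        gcongr
        exact toSphere_setOf_le_inner_le finrank_euclideanSpace_fin hr hγ0 hγu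
    _ = _ := by rw [mul_comm, mul_assoc, ENNReal.mul_inv_cancel hU0 (measure_ne_top _ _), mul_one]

theorem stmt_19 (n : ℕ) (hn : 1 ≤ n)
    (r : EuclideanSpace ℝ (Fin n)) (hr : ‖r‖ = 1)
    (μ : Measure (Metric.sphere (0 : EuclideanSpace ℝ (Fin n)) 1))
    (hμ : μ = ((volume : Measure (EuclideanSpace ℝ (Fin n))).toSphere Set.univ)⁻¹ •
        (volume : Measure (EuclideanSpace ℝ (Fin n))).toSphere)
    (γ : ℝ) (hγl : 1 / Real.sqrt (2 * Real.pi * n) < γ) (hγu : γ < 1) :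
    μ { x : Metric.sphere (0 : EuclideanSpace ℝ (Fin n)) 1 |
        γ ≤ ⟪r, (x : EuclideanSpace ℝ (Fin n))⟫ }
      ≤ ENNReal.ofReal
          ((2 : ℝ) ^ (((n : ℝ) - 1) * ((1 / 2) * Real.logb 2 (1 - γ ^ 2)))) :=
  stmt_19_general n r hr μ hμ γ hγl hγu
end
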